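/- arXiv:1704.02374 — 4 statements merged into one kernel-verified Lean document; each statement's English description precedes it below -/
import Mathlib

section
/- Let (S_n) be a simple symmetric ±1 random walk started at 0. Then for every x ∈ [0,1], (1/n) log P(S_k ≥ x k for all k = 0, ..., n) → −β(x) as n → ∞, where β(x) = (1/2)((1+x)log(1+x) + (1-x)log(1-x)). -/
open MeasureTheory ProbabilityTheory Filter

noncomputable def brwBeta (x : ℝ) : ℝ :=
  (1 / 2) * ((1 + x) * Real.log (1 + x) + (1 - x) * Real.log (1 - x))

/-!
Let `G n` be the set of ±1 paths of length `n` staying above slope `x`, so that the probability is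
`#G n / 2 ^ n`. With `q = (1 + x) / 2` and the binary entropy `H`, one has `β x = log 2 - H q`,
and `exp (n H(p/n)) / (n + 1)² ≤ #G n ≤ exp (n H q)` for `p = ⌈q n⌉`.

Upper bound: a path in `G n` ends at height `≥ x n`, i.e. has at least `q n` up-steps, and
under the Bernoulli(`q`) product measure (`q ≥ 1/2`) each such path has mass `≥ exp (-n H q)`.

Lower bound: by the cycle lemma, some cyclic rotation of any path with `p` up-steps lies in `G n`
(start it at a minimum of `walk t - t · (slope of the whole path)`); hence `C(n, p) ≤ n · #G n`.
Finally `C(n, p) p^p (n-p)^(n-p)` is the largest of the `n + 1` terms of `(p + (n - p))^n = n^n`.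
-/

open Finset Real Topology

theorem brwBeta_eq_log_two_sub_binEntropy (x : ℝ) :
    brwBeta x = log 2 - binEntropy ((1 + x) / 2) := by
  have h₁ : (1 + x) / 2 = (1 + x) * 2⁻¹ := div_eq_mul_inv _ _
  have h₂ : 1 - (1 + x) / 2 = (1 - x) * 2⁻¹ := by ring
  rw [binEntropy_eq_negMulLog_add_negMulLog_one_sub, h₂, h₁, negMulLog_mul, negMulLog_mul]
  simp only [brwBeta, negMulLog, log_inv]
  ring

theorem mul_binEntropy_div {n : ℝ} (hn : n ≠ 0) (p : ℝ) :
    n * binEntropy (p / n) = n * log n + negMulLog p + negMulLog (n - p) := by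
  have h : 1 - p / n = (n - p) * n⁻¹ := by field_simp
  rw [binEntropy_eq_negMulLog_add_negMulLog_one_sub, h, div_eq_mul_inv, negMulLog_mul,
    negMulLog_mul]
  simp only [negMulLog, log_inv]
  field_simp
  ring

theorem apply_le_apply_of_unimodal {β : Type*} [Preorder β] {f : ℕ → β} {m : ℕ}
    (hup : ∀ k < m, f k ≤ f (k + 1)) (hdown : ∀ k ≥ m, f (k + 1) ≤ f k) (k : ℕ) :
    f k ≤ f m := by
  rcases le_total k m with hkm | hmk
  · exact monotoneOn_of_le_add_one Set.ordConnected_Iic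
      (fun a _ _ ha => hup a (Nat.lt_of_succ_le ha)) hkm Set.self_mem_Iic hkm
  · exact antitoneOn_of_add_one_le Set.ordConnected_Ici
      (fun a _ ha _ => hdown a ha) Set.self_mem_Ici hmk hmk

namespace Nat

/-- The `k`-th term of the binomial expansion of `(p + (n - p)) ^ n`. -/
def binomTerm (n p k : ℕ) : ℕ := n.choose k * p ^ k * (n - p) ^ (n - k)

theorem binomTerm_le_binomTerm_succ {n p k : ℕ} (hkp : k < p) (hpn : p ≤ n) :
    binomTerm n p k ≤ binomTerm n p (k + 1) := by
  have hratio : n.choose k * (n - p) ≤ n.choose (k + 1) * p := by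
    refine Nat.le_of_mul_le_mul_right ?_ k.succ_pos
    calc n.choose k * (n - p) * (k + 1) = n.choose k * ((n - p) * (k + 1)) := by ring
      _ ≤ n.choose k * ((n - k) * p) := by gcongr; omega
      _ = n.choose (k + 1) * p * (k + 1) := by
          rw [← Nat.mul_assoc, ← choose_succ_right_eq]; ring
  have hexp : n - k = n - (k + 1) + 1 := by omega
  calc binomTerm n p k = n.choose k * (n - p) * (p ^ k * (n - p) ^ (n - (k + 1))) := by
        rw [binomTerm, hexp]; ring
    _ ≤ n.choose (k + 1) * p * (p ^ k * (n - p) ^ (n - (k + 1))) := by gcongr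
    _ = binomTerm n p (k + 1) := by rw [binomTerm]; ring

theorem binomTerm_sub_sub {n p k : ℕ} (hkn : k ≤ n) (hpn : p ≤ n) :
    binomTerm n (n - p) (n - k) = binomTerm n p k := by
  rw [binomTerm, binomTerm, choose_symm hkn, Nat.sub_sub_self hkn, Nat.sub_sub_self hpn]
  ring

theorem binomTerm_le_binomTerm_self {n p : ℕ} (hpn : p ≤ n) (k : ℕ) :
    binomTerm n p k ≤ binomTerm n p p := by
  refine apply_le_apply_of_unimodal (f := binomTerm n p)
    (fun k hk => binomTerm_le_binomTerm_succ hk hpn) (fun k hk => ?_) k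
  rcases Nat.lt_or_ge k n with hkn | hkn
  · rw [← binomTerm_sub_sub hkn hpn, ← binomTerm_sub_sub hkn.le hpn,
      show n - k = n - (k + 1) + 1 by omega]
    exact binomTerm_le_binomTerm_succ (by omega) (Nat.sub_le n p)
  · simp [binomTerm, choose_eq_zero_of_lt (Nat.lt_succ_of_le hkn)]

theorem pow_self_le_succ_mul_binomTerm {n p : ℕ} (hpn : p ≤ n) :
    n ^ n ≤ (n + 1) * binomTerm n p p := by
  have hsum : n ^ n = ∑ k ∈ range (n + 1), binomTerm n p k := by
    have h := add_pow p (n - p) n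
    rw [Nat.add_sub_cancel' hpn] at h
    rw [h]
    exact sum_congr rfl fun k _ => by rw [binomTerm, Nat.cast_id]; ring
  rw [hsum]
  simpa using
    sum_le_card_nsmul (range (n + 1)) _ _ fun k _ => binomTerm_le_binomTerm_self hpn k

end Nat

theorem exp_mul_binEntropy_le_choose {n p : ℕ} (hpn : p ≤ n) :
    exp (n * binEntropy (p / n)) ≤ (n + 1) * n.choose p := by
  rcases n.eq_zero_or_pos with rfl | hn
  · obtain rfl : p = 0 := Nat.le_zero.mp hpn
    simp
  have hpow_self (m : ℕ) : (m : ℝ) ^ m ≠ 0 := by simp [pow_eq_zero_iff']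
  have hchoose : (n.choose p : ℝ) ≠ 0 := by exact_mod_cast (Nat.choose_pos hpn).ne'
  have hpow :
      (n : ℝ) ^ n ≤ (n + 1) * (n.choose p * p ^ p * ((n - p : ℕ) : ℝ) ^ (n - p)) := by
    exact_mod_cast Nat.pow_self_le_succ_mul_binomTerm hpn
  have hlog := log_le_log (by positivity) hpow
  rw [log_mul (by positivity) (by simp [pow_eq_zero_iff', hchoose]),
    log_mul (by simp [pow_eq_zero_iff', hchoose]) (hpow_self _), log_mul hchoose (hpow_self _),
    log_pow, log_pow, log_pow, Nat.cast_sub hpn] at hlog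
  rw [← le_log_iff_exp_le (by positivity), log_mul (by positivity) hchoose,
    mul_binEntropy_div (by positivity)]
  simp only [negMulLog]
  linarith

theorem exp_neg_mul_binEntropy_le {q : ℝ} (hq : 1 / 2 ≤ q) (hq₁ : q ≤ 1) {n k : ℕ}
    (hqk : q * n ≤ k) (hkn : k ≤ n) :
    exp (-(n * binEntropy q)) ≤ q ^ k * (1 - q) ^ (n - k) := by
  rcases hq₁.eq_or_lt with rfl | hq₁
  · obtain rfl : k = n := le_antisymm hkn (by exact_mod_cast (one_mul (n : ℝ)) ▸ hqk)
    simp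
  have hq₀ : 0 < 1 - q := by linarith
  have hlog : log (1 - q) ≤ log q := log_le_log hq₀ (by linarith)
  rw [← exp_log (by positivity : 0 < q ^ k * (1 - q) ^ (n - k)), exp_le_exp,
    log_mul (by positivity) (by positivity), log_pow, log_pow, Nat.cast_sub hkn,
    binEntropy_eq_negMulLog_add_negMulLog_one_sub]
  simp only [negMulLog]
  nlinarith [mul_nonneg (sub_nonneg.mpr hqk) (sub_nonneg.mpr hlog)]

theorem card_powerset_filter_le_exp_mul_binEntropy {ι : Type*} (s : Finset ι) {q : ℝ}
    (hq : 1 / 2 ≤ q) (hq₁ : q ≤ 1) :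
    (#{t ∈ s.powerset | q * #s ≤ #t} : ℝ) ≤ exp (#s * binEntropy q) := by
  set F := {t ∈ s.powerset | q * #s ≤ #t}
  have hq₀ : 0 ≤ 1 - q := by linarith
  have hle : (#F : ℝ) * exp (-(#s * binEntropy q)) ≤ 1 :=
    calc (#F : ℝ) * exp (-(#s * binEntropy q))
        = ∑ _t ∈ F, exp (-(#s * binEntropy q)) := by rw [sum_const, nsmul_eq_mul]
      _ ≤ ∑ t ∈ F, q ^ #t * (1 - q) ^ (#s - #t) := by
          refine sum_le_sum fun t ht => ?_
          rw [mem_filter, mem_powerset] at ht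
          exact exp_neg_mul_binEntropy_le hq hq₁ ht.2 (card_le_card ht.1)
      _ ≤ ∑ t ∈ s.powerset, q ^ #t * (1 - q) ^ (#s - #t) :=
          sum_le_sum_of_subset_of_nonneg (filter_subset _ _) fun t _ _ => by positivity
      _ = 1 := by rw [sum_pow_mul_eq_add_pow, add_sub_cancel, one_pow]
  rwa [exp_neg, ← div_eq_mul_inv, div_le_one (exp_pos _)] at hle

theorem Function.Periodic.exists_forall_mean_mul_le_sum_range_add {a : ℕ → ℝ} {n : ℕ}
    (ha : Function.Periodic a n) (hn : 0 < n) :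
    ∃ j < n, ∀ k : ℕ, (∑ i ∈ range n, a i) / n * k ≤ ∑ i ∈ range k, a (j + i) := by
  set A : ℕ → ℝ := fun t => ∑ i ∈ range t, a i
  set c := A n / n
  have hA_add (t m : ℕ) : A (t + m) = A t + ∑ i ∈ range m, a (t + i) := sum_range_add _ _ _
  have hperiodic : Function.Periodic (fun t : ℕ => A t - c * t) n := fun t => by
    have hcn : c * n = A n := div_mul_cancel₀ _ (by positivity)
    have hshift : ∑ i ∈ range t, a (n + i) = A t :=
      sum_congr rfl fun i _ => by rw [add_comm, ha]
    simp only [add_comm t n, hA_add n t, hshift]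
    push_cast
    linarith
  obtain ⟨j, hj, hmin⟩ :=
    exists_min_image (range n) (fun t : ℕ => A t - c * t) ⟨0, mem_range.mpr hn⟩
  refine ⟨j, mem_range.mp hj, fun k => ?_⟩
  have hjk := hmin _ (mem_range.mpr (Nat.mod_lt (j + k) hn))
  rw [hperiodic.map_mod_nat, hA_add] at hjk
  push_cast at hjk
  linarith

theorem tendsto_log_succ_div_atTop :
    Tendsto (fun n : ℕ => log (n + 1) / n) atTop (𝓝 0) := by
  have h := (tendsto_pow_log_div_mul_add_atTop 1 (-1) 1 one_ne_zero).comp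
    (tendsto_atTop_add_const_right _ 1 tendsto_natCast_atTop_atTop)
  simpa [Function.comp_def] using h

namespace SimpleRandomWalk

/-- The height after `k` steps of the path whose up-steps are the elements of `S`. -/
noncomputable def walk (S : Finset ℕ) (k : ℕ) : ℝ :=
  ∑ i ∈ range k, if i ∈ S then 1 else -1

noncomputable def stayAbove (n : ℕ) (x : ℝ) : Finset (Finset ℕ) :=
  {S ∈ (range n).powerset | ∀ k ≤ n, x * k ≤ walk S k}

theorem subset_range_of_mem_stayAbove {n : ℕ} {x : ℝ} {S : Finset ℕ}
    (hS : S ∈ stayAbove n x) : S ⊆ range n :=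
  mem_powerset.mp (mem_filter.mp hS).1

theorem walk_eq_of_subset_range {S : Finset ℕ} {n : ℕ} (hS : S ⊆ range n) :
    walk S n = 2 * #S - n := by
  have hcard := card_filter_add_card_filter_not (s := range n) (fun i => i ∈ S)
  rw [filter_mem_eq_inter, inter_eq_right.mpr hS, card_range] at hcard
  rw [walk, sum_ite, sum_const, sum_const, filter_mem_eq_inter, inter_eq_right.mpr hS,
    nsmul_eq_mul, nsmul_eq_mul]
  have : (#S : ℝ) + #{i ∈ range n | i ∉ S} = n := by exact_mod_cast hcard
  linarith

theorem range_mem_stayAbove {n : ℕ} {x : ℝ} (hx : x ≤ 1) : range n ∈ stayAbove n x := by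
  refine mem_filter.mpr ⟨mem_powerset_self _, fun k hk => ?_⟩
  rw [walk, sum_ite_of_true fun i hi => mem_range.mpr ((mem_range.mp hi).trans_le hk)]
  simpa using mul_le_of_le_one_left k.cast_nonneg hx

theorem stayAbove_subset_filter_card_ge {n : ℕ} (x : ℝ) :
    stayAbove n x ⊆ {S ∈ (range n).powerset | (1 + x) / 2 * #(range n) ≤ #S} := by
  intro S hS
  have hend := (mem_filter.mp hS).2 n le_rfl
  rw [walk_eq_of_subset_range (subset_range_of_mem_stayAbove hS)] at hend
  refine mem_filter.mpr ⟨(mem_filter.mp hS).1, ?_⟩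
  rw [card_range]
  linarith

def rotate (n j : ℕ) (S : Finset ℕ) : Finset ℕ := {i ∈ range n | (j + i) % n ∈ S}

theorem rotate_sub_rotate {n j : ℕ} {S : Finset ℕ} (hS : S ⊆ range n) (hj : j ≤ n) :
    rotate n (n - j) (rotate n j S) = S := by
  ext i
  simp only [rotate, mem_filter, mem_range, Nat.add_mod_mod]
  constructor
  · rintro ⟨hi, -, hmem⟩
    rwa [show j + (n - j + i) = n + i by omega, Nat.add_mod_left, Nat.mod_eq_of_lt hi] at hmem
  · intro hi
    have hin := mem_range.mp (hS hi)
    refine ⟨hin, Nat.mod_lt _ (by omega), ?_⟩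
    rwa [show j + (n - j + i) = n + i by omega, Nat.add_mod_left, Nat.mod_eq_of_lt hin]

theorem walk_rotate {n j k : ℕ} (S : Finset ℕ) (hk : k ≤ n) :
    walk (rotate n j S) k = ∑ i ∈ range k, if (j + i) % n ∈ S then 1 else -1 := by
  refine sum_congr rfl fun i hi => ?_
  have hin : i < n := (mem_range.mp hi).trans_le hk
  simp [rotate, hin]

theorem exists_rotate_mem_stayAbove {n : ℕ} {x : ℝ} {S : Finset ℕ} (hn : 0 < n)
    (hx : x * n ≤ walk S n) : ∃ j < n, rotate n j S ∈ stayAbove n x := by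
  set a : ℕ → ℝ := fun t => if t % n ∈ S then 1 else -1
  have ha : Function.Periodic a n := fun t => by simp [a]
  have hsum : ∑ i ∈ range n, a i = walk S n :=
    sum_congr rfl fun i hi => by simp [a, Nat.mod_eq_of_lt (mem_range.mp hi)]
  obtain ⟨j, hj, hrot⟩ := ha.exists_forall_mean_mul_le_sum_range_add hn
  refine ⟨j, hj, mem_filter.mpr ⟨mem_powerset.mpr (filter_subset _ _), fun k hk => ?_⟩⟩
  have hmean : x ≤ walk S n / n := (le_div_iff₀ (by positivity)).mpr hx
  rw [walk_rotate S hk]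
  calc x * k ≤ walk S n / n * k := by gcongr
    _ ≤ _ := hsum ▸ hrot k

theorem choose_le_mul_card_stayAbove {n p : ℕ} {x : ℝ} (hn : 0 < n)
    (hxp : x * n ≤ 2 * p - n) : n.choose p ≤ n * #(stayAbove n x) := by
  have hcover : powersetCard p (range n) ⊆
      (range n).biUnion fun j => (stayAbove n x).image (rotate n (n - j)) := by
    intro S hS
    obtain ⟨hSn, hSp⟩ := mem_powersetCard.mp hS
    obtain ⟨j, hj, hmem⟩ := exists_rotate_mem_stayAbove hn
      (by rwa [walk_eq_of_subset_range hSn, hSp])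
    exact mem_biUnion.mpr ⟨j, mem_range.mpr hj,
      mem_image.mpr ⟨_, hmem, rotate_sub_rotate hSn hj.le⟩⟩
  calc n.choose p = #(powersetCard p (range n)) := by rw [card_powersetCard, card_range]
    _ ≤ ∑ j ∈ range n, #((stayAbove n x).image (rotate n (n - j))) :=
        (card_le_card hcover).trans card_biUnion_le
    _ ≤ ∑ _j ∈ range n, #(stayAbove n x) := sum_le_sum fun _ _ => card_image_le
    _ = n * #(stayAbove n x) := by rw [sum_const, card_range, smul_eq_mul]

theorem card_stayAbove_le_exp {n : ℕ} {x : ℝ} (hx₀ : 0 ≤ x) (hx₁ : x ≤ 1) :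
    (#(stayAbove n x) : ℝ) ≤ exp (n * binEntropy ((1 + x) / 2)) :=
  calc (#(stayAbove n x) : ℝ)
      ≤ #{S ∈ (range n).powerset | (1 + x) / 2 * #(range n) ≤ #S} := by
        exact_mod_cast card_le_card (stayAbove_subset_filter_card_ge x)
    _ ≤ exp (#(range n) * binEntropy ((1 + x) / 2)) :=
        card_powerset_filter_le_exp_mul_binEntropy _ (by linarith) (by linarith)
    _ = exp (n * binEntropy ((1 + x) / 2)) := by rw [card_range]

theorem exp_binEntropy_ceil_le_card_stayAbove {n : ℕ} {x : ℝ} (hn : 0 < n) (hx₁ : x ≤ 1) :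
    exp (n * binEntropy (⌈(1 + x) / 2 * n⌉₊ / n)) ≤ (n + 1) ^ 2 * #(stayAbove n x) := by
  set p := ⌈(1 + x) / 2 * n⌉₊
  have hpn : p ≤ n := Nat.ceil_le.mpr (by nlinarith [(n.cast_nonneg : (0 : ℝ) ≤ n)])
  have hxp : x * n ≤ 2 * p - n := by linarith [Nat.le_ceil ((1 + x) / 2 * n)]
  calc exp (n * binEntropy (p / n)) ≤ (n + 1) * n.choose p := exp_mul_binEntropy_le_choose hpn
    _ ≤ (n + 1) * (n * #(stayAbove n x)) := by
        gcongr
        exact_mod_cast choose_le_mul_card_stayAbove hn hxp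
    _ ≤ (n + 1) ^ 2 * #(stayAbove n x) := by
        rw [sq, mul_assoc]
        gcongr
        linarith

theorem tendsto_inv_mul_log_card_stayAbove_div {x : ℝ} (hx₀ : 0 ≤ x) (hx₁ : x ≤ 1) :
    Tendsto (fun n : ℕ => (n : ℝ)⁻¹ * log (#(stayAbove n x) / 2 ^ n)) atTop
      (𝓝 (binEntropy ((1 + x) / 2) - log 2)) := by
  set q := (1 + x) / 2
  have hcard (n : ℕ) : (0 : ℝ) < #(stayAbove n x) := by
    exact_mod_cast card_pos.mpr ⟨_, range_mem_stayAbove hx₁⟩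
  have hlower : Tendsto (fun n : ℕ => binEntropy (⌈q * n⌉₊ / n) - 2 * (log (n + 1) / n))
      atTop (𝓝 (binEntropy q)) := by
    have hceil := (tendsto_nat_ceil_mul_div_atTop (by positivity : 0 ≤ q)).comp
      tendsto_natCast_atTop_atTop
    simpa using ((binEntropy_continuous.tendsto q).comp hceil).sub
      (tendsto_log_succ_div_atTop.const_mul 2)
  refine ((tendsto_of_tendsto_of_tendsto_of_le_of_le'
    (f := fun n : ℕ => (n : ℝ)⁻¹ * log #(stayAbove n x)) hlower tendsto_const_nhds ?_ ?_)
    |>.sub_const (log 2)).congr' ?_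
  · filter_upwards [eventually_gt_atTop 0] with n hn
    have h := (le_log_iff_exp_le (mul_pos (by positivity) (hcard n))).mpr
      (exp_binEntropy_ceil_le_card_stayAbove hn hx₁)
    rw [log_mul (by positivity) (hcard n).ne', log_pow] at h
    calc binEntropy (⌈q * n⌉₊ / n) - 2 * (log (n + 1) / n)
        = (n : ℝ)⁻¹ * (n * binEntropy (⌈q * n⌉₊ / n) - 2 * log (n + 1)) := by field_simp
      _ ≤ (n : ℝ)⁻¹ * log #(stayAbove n x) := by gcongr; push_cast at h; linarith
  · filter_upwards [eventually_gt_atTop 0] with n hn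
    exact (inv_mul_le_iff₀ (by positivity)).mpr
      ((log_le_iff_le_exp (hcard n)).mpr (card_stayAbove_le_exp hx₀ hx₁))
  · filter_upwards [eventually_gt_atTop 0] with n hn
    rw [log_div (hcard n).ne' (by positivity), log_pow]
    field_simp

section Probability

variable {Ω : Type*}

noncomputable def upSteps (X : ℕ → Ω → ℝ) (n : ℕ) (ω : Ω) : Finset ℕ :=
  {i ∈ range n | X i ω = 1}

theorem upSteps_preimage_singleton {X : ℕ → Ω → ℝ} {n : ℕ} {S : Finset ℕ}
    (hS : S ⊆ range n) :
    upSteps X n ⁻¹' {S} = ⋂ i ∈ range n, X i ⁻¹' (if i ∈ S then {1} else {1}ᶜ) := by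
  ext ω
  simp only [Set.mem_preimage, Set.mem_singleton_iff, Set.mem_iInter, upSteps, Finset.ext_iff,
    mem_filter, mem_range]
  refine ⟨fun h i hi => ?_, fun h i => ?_⟩
  · split_ifs with hiS
    · exact ((h i).mpr hiS).2
    · exact fun h1 => hiS ((h i).mp ⟨hi, h1⟩)
  · by_cases hiS : i ∈ S
    · have hi := mem_range.mp (hS hiS)
      simpa [hiS, hi] using h i hi
    · simp only [hiS, iff_false, not_and]
      intro hi
      simpa [hiS] using h i hi

noncomputable def rademacher : Measure ℝ :=
  (2 : ENNReal)⁻¹ • (Measure.dirac 1 + Measure.dirac (-1))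

variable [MeasurableSpace Ω] {μ : Measure Ω}

theorem measure_preimage_ite_one {Y : Ω → ℝ} (hY : Measurable Y)
    (hlaw : μ.map Y = rademacher) (b : Prop) [Decidable b] :
    μ (Y ⁻¹' (if b then {1} else {1}ᶜ)) = 2⁻¹ := by
  have hB : MeasurableSet (if b then {(1 : ℝ)} else {1}ᶜ) := by
    split_ifs <;> measurability
  rw [← Measure.map_apply hY hB, hlaw, rademacher]
  split_ifs <;> norm_num [Measure.dirac_apply', Set.indicator]

theorem ae_eq_one_or_eq_neg_one {Y : Ω → ℝ} (hY : Measurable Y)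
    (hlaw : μ.map Y = rademacher) : ∀ᵐ ω ∂μ, Y ω = 1 ∨ Y ω = -1 := by
  refine ae_of_ae_map (p := fun y => y = 1 ∨ y = -1) hY.aemeasurable ?_
  rw [hlaw, rademacher]
  refine Measure.ae_smul_measure (ae_add_measure_iff.mpr ⟨?_, ?_⟩) _ <;>
    rw [ae_dirac_iff (by measurability)] <;> simp

theorem measure_upSteps_preimage_singleton {X : ℕ → Ω → ℝ}
    (hmeas : ∀ i, Measurable (X i)) (hlaw : ∀ i, μ.map (X i) = rademacher)
    (hindep : iIndepFun X μ) {n : ℕ} {S : Finset ℕ} (hS : S ⊆ range n) :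
    μ (upSteps X n ⁻¹' {S}) = 2⁻¹ ^ n := by
  rw [upSteps_preimage_singleton hS, hindep.measure_inter_preimage_eq_mul _
    fun i _ => by split_ifs <;> measurability]
  simp [measure_preimage_ite_one (hmeas _) (hlaw _)]

theorem ae_forall_eq_ite_mem_upSteps {X : ℕ → Ω → ℝ} (hmeas : ∀ i, Measurable (X i))
    (hlaw : ∀ i, μ.map (X i) = rademacher) (n : ℕ) :
    ∀ᵐ ω ∂μ, ∀ i < n, X i ω = if i ∈ upSteps X n ω then 1 else -1 := by
  filter_upwards [ae_all_iff.mpr fun i => ae_eq_one_or_eq_neg_one (hmeas i) (hlaw i)]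
    with ω hω i hi
  rcases hω i with h | h <;> norm_num [upSteps, hi, h]

theorem measure_forall_le_sum_eq {X : ℕ → Ω → ℝ} (hmeas : ∀ i, Measurable (X i))
    (hlaw : ∀ i, μ.map (X i) = rademacher) (hindep : iIndepFun X μ) (n : ℕ) (x : ℝ) :
    μ {ω | ∀ k ≤ n, x * k ≤ ∑ i ∈ range k, X i ω} = #(stayAbove n x) * 2⁻¹ ^ n := by
  have hae : {ω | ∀ k ≤ n, x * k ≤ ∑ i ∈ range k, X i ω} =ᵐ[μ]
      upSteps X n ⁻¹' ↑(stayAbove n x) := by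
    refine eventuallyEq_set.mpr ?_
    filter_upwards [ae_forall_eq_ite_mem_upSteps hmeas hlaw n] with ω hω
    have hwalk : ∀ k ≤ n, ∑ i ∈ range k, X i ω = walk (upSteps X n ω) k := fun k hk =>
      sum_congr rfl fun i hi => hω i ((mem_range.mp hi).trans_le hk)
    simp only [Set.mem_preimage, stayAbove, mem_coe, mem_filter, mem_powerset,
      upSteps, filter_subset, true_and]
    exact forall₂_congr fun k hk => by rw [hwalk k hk, upSteps]
  rw [measure_congr hae, ← sum_measure_preimage_singleton _ fun S hS => ?_]
  · rw [sum_congr rfl fun S (hS : S ∈ stayAbove n x) => measure_upSteps_preimage_singleton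
      hmeas hlaw hindep (subset_range_of_mem_stayAbove hS), sum_const, nsmul_eq_mul]
  · rw [upSteps_preimage_singleton (subset_range_of_mem_stayAbove hS)]
    exact .biInter (countable_toSet _) fun i _ => hmeas i (by split_ifs <;> measurability)

end Probability

end SimpleRandomWalk

theorem ssrw_stay_above_rate_general
    {Ω : Type*} [MeasurableSpace Ω] (μ : Measure Ω)
    (X : ℕ → Ω → ℝ) (hmeas : ∀ i, Measurable (X i))
    (hindep : iIndepFun X μ)
    (hdist : ∀ i, Measure.map (X i) μ =
      (2 : ENNReal)⁻¹ • (Measure.dirac (1 : ℝ) + Measure.dirac (-1 : ℝ)))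
    (x : ℝ) (hx : x ∈ Set.Icc (0 : ℝ) 1) :
    Tendsto (fun n : ℕ =>
        (n : ℝ)⁻¹ * Real.log
          ((μ {ω | ∀ k ≤ n, x * k ≤ ∑ i ∈ Finset.range k, X i ω}).toReal))
      atTop (nhds (-brwBeta x)) := by
  have hprob (n : ℕ) : (μ {ω | ∀ k ≤ n, x * k ≤ ∑ i ∈ range k, X i ω}).toReal =
      #(SimpleRandomWalk.stayAbove n x) / 2 ^ n := by
    rw [SimpleRandomWalk.measure_forall_le_sum_eq hmeas hdist hindep, ENNReal.toReal_mul]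
    simp [div_eq_mul_inv]
  simp_rw [hprob, brwBeta_eq_log_two_sub_binEntropy, neg_sub]
  exact SimpleRandomWalk.tendsto_inv_mul_log_card_stayAbove_div hx.1 hx.2

/-- For the simple symmetric ±1 random walk,
`(1/n) log P(S_k ≥ x k for all k = 0,…,n) → -β(x)` as `n → ∞`. -/
theorem ssrw_stay_above_rate
    {Ω : Type*} [MeasurableSpace Ω] (μ : Measure Ω) [IsProbabilityMeasure μ]
    (X : ℕ → Ω → ℝ) (hmeas : ∀ i, Measurable (X i))
    (hindep : iIndepFun X μ)
    (hdist : ∀ i, Measure.map (X i) μ =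
      (2 : ENNReal)⁻¹ • (Measure.dirac (1 : ℝ) + Measure.dirac (-1 : ℝ)))
    (x : ℝ) (hx : x ∈ Set.Icc (0 : ℝ) 1) :
    Tendsto (fun n : ℕ =>
        (n : ℝ)⁻¹ * Real.log
          ((μ {ω | ∀ k ≤ n, x * k ≤ ∑ i ∈ Finset.range k, X i ω}).toReal))
      atTop (nhds (-brwBeta x)) :=
  ssrw_stay_above_rate_general μ X hmeas hindep hdist x hx
end

section
/- Let ν be the standard Gaussian measure, A ∈ 𝒜 nonempty, p ∈ (0,1). Define Ĩ^±(A,p) = inf{x ≥ 0 : ν(A ∓ x) ≥ p} and J̃(A,p) = inf{u ∈ [0,1) : p ≤ sup_{x∈ℝ} ν(A/√(1−u) − x)}. Then J̃(A,p) > 0 if and only if min{Ĩ⁺(A,p), Ĩ⁻(A,p)} = ∞. -/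
/-!
If no translate of `A` has Gaussian mass `≥ p`, then `A` contains no half-line (translating a
half-line pushes its mass to `1`), so `A` is a finite union of bounded intervals `(lᵢ, rᵢ]`. The
standard Gaussian density is at most `1`, so moving the endpoints by `δᵢ` changes the mass by at
most `∑ δᵢ`. Hence `x ↦ ν(A - x)` is Lipschitz and vanishes at infinity, so it has a maximum
`M < p`; and dilating by `1/√(1-u)` raises `sup_x ν(A/√(1-u) - x)` by at most
`(1/√(1-u) - 1) ∑ (|lᵢ| + |rᵢ|) < p - M` for small `u`. Conversely a translate of mass `≥ p`
makes `u = 0` admissible. Since `sInf ∅ = 0` in Lean, one also needs an admissible `u`: dilating a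
single interval of `A` by a large factor brings its mass close to `1`.
-/

open MeasureTheory ProbabilityTheory

/-- Membership in the algebra 𝒜 generated by half-lines `(-∞, x]`. -/
def IsHalfLineAlg (A : Set ℝ) : Prop :=
  ∃ s : Finset (Set ℝ),
    (∀ I ∈ s, (∃ a : ℝ, I = Set.Iic a) ∨ (∃ a b : ℝ, I = Set.Ioc a b) ∨
      (∃ a : ℝ, I = Set.Ioi a)) ∧ A = ⋃ I ∈ s, I

open Set Filter Topology

lemma gaussianPDFReal_one_le_one (m x : ℝ) : gaussianPDFReal m 1 x ≤ 1 := by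
  rw [gaussianPDFReal_def]
  refine mul_le_one₀ (inv_le_one_of_one_le₀ ?_) (Real.exp_nonneg _) (Real.exp_le_one_iff.2 ?_)
  · rw [Real.one_le_sqrt]
    push_cast
    nlinarith [Real.pi_gt_three]
  · have := sq_nonneg (x - m)
    push_cast
    linarith

lemma gaussianReal_le_volume (m : ℝ) : gaussianReal m 1 ≤ volume := by
  rw [gaussianReal_of_var_ne_zero m one_ne_zero]
  calc volume.withDensity (gaussianPDF m 1) ≤ volume.withDensity 1 :=
        withDensity_mono <| ae_of_all _ fun x =>
          ENNReal.ofReal_le_one.2 (gaussianPDFReal_one_le_one m x)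
    _ = volume := withDensity_one

lemma Ioc_diff_Ioc_subset (a b a' b' : ℝ) : Ioc a' b' \ Ioc a b ⊆ Ioc a' a ∪ Ioc b b' := by
  rintro t ⟨⟨h₁, h₂⟩, ht⟩
  rcases le_or_gt t a with h | h
  · exact Or.inl ⟨h₁, h⟩
  · exact Or.inr ⟨lt_of_not_ge fun h' => ht ⟨h, h'⟩, h₂⟩

lemma volume_Ioc_diff_Ioc_le (a b a' b' : ℝ) :
    volume (Ioc a' b' \ Ioc a b) ≤ ENNReal.ofReal (|a' - a| + |b' - b|) := by
  calc volume (Ioc a' b' \ Ioc a b) ≤ volume (Ioc a' a) + volume (Ioc b b') :=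
        (measure_mono (Ioc_diff_Ioc_subset a b a' b')).trans (measure_union_le _ _)
    _ = ENNReal.ofReal (a - a') + ENNReal.ofReal (b' - b) := by
        rw [Real.volume_Ioc, Real.volume_Ioc]
    _ ≤ ENNReal.ofReal |a' - a| + ENNReal.ofReal |b' - b| := by
        gcongr
        · rw [abs_sub_comm]; exact le_abs_self _
        · exact le_abs_self _
    _ = ENNReal.ofReal (|a' - a| + |b' - b|) :=
        (ENNReal.ofReal_add (abs_nonneg _) (abs_nonneg _)).symm

lemma measureReal_biUnion_Ioc_le {ι : Type*} (μ : Measure ℝ) [IsFiniteMeasure μ] (hμ : μ ≤ volume)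
    (s : Finset ι) (a b a' b' : ι → ℝ) :
    μ.real (⋃ i ∈ s, Ioc (a' i) (b' i)) ≤
      μ.real (⋃ i ∈ s, Ioc (a i) (b i)) + ∑ i ∈ s, (|a' i - a i| + |b' i - b i|) := by
  set B' := ⋃ i ∈ s, Ioc (a' i) (b' i)
  set B := ⋃ i ∈ s, Ioc (a i) (b i)
  have hdiff : B' \ B ⊆ ⋃ i ∈ s, (Ioc (a' i) (b' i) \ Ioc (a i) (b i)) := by
    rintro t ⟨ht, htB⟩
    obtain ⟨i, hi, hti⟩ := mem_iUnion₂.1 ht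
    exact mem_iUnion₂.2 ⟨i, hi, hti, fun h => htB (mem_iUnion₂.2 ⟨i, hi, h⟩)⟩
  have hvol : μ (B' \ B) ≤ ENNReal.ofReal (∑ i ∈ s, (|a' i - a i| + |b' i - b i|)) := by
    rw [ENNReal.ofReal_sum_of_nonneg fun i _ => by positivity]
    calc μ (B' \ B) ≤ volume (⋃ i ∈ s, (Ioc (a' i) (b' i) \ Ioc (a i) (b i))) :=
          (hμ _).trans (measure_mono hdiff)
      _ ≤ _ := (measure_biUnion_finset_le _ _).trans
          (Finset.sum_le_sum fun i _ => volume_Ioc_diff_Ioc_le _ _ _ _)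
  calc μ.real B' ≤ μ.real (B ∪ B' \ B) :=
        measureReal_mono (by rw [union_sdiff_self]; exact subset_union_right)
    _ ≤ μ.real B + μ.real (B' \ B) := measureReal_union_le _ _
    _ ≤ _ := by gcongr; exact ENNReal.toReal_le_of_le_ofReal (by positivity) hvol

lemma image_div_sub_Ioc {c : ℝ} (hc : 0 < c) (x a b : ℝ) :
    (fun t => t / c - x) '' Ioc a b = Ioc (a / c - x) (b / c - x) := by
  have hf : (fun t => t / c - x) = (c⁻¹ * · + -x) := by ext t; ring
  rw [hf, image_affine_Ioc (inv_pos.2 hc), inv_mul_eq_div, inv_mul_eq_div, ← sub_eq_add_neg,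
    ← sub_eq_add_neg]

lemma image_div_sub_biUnion_Ioc {ι : Type*} (s : Finset ι) (l r : ι → ℝ) {c : ℝ} (hc : 0 < c)
    (x : ℝ) :
    (fun t => t / c - x) '' ⋃ i ∈ s, Ioc (l i) (r i) =
      ⋃ i ∈ s, Ioc (l i / c - x) (r i / c - x) := by
  simp only [image_iUnion₂, image_div_sub_Ioc hc]

lemma exists_lt_forall_le_of_tendsto_cocompact {β : Type*} [TopologicalSpace β] [Nonempty β]
    {f : β → ℝ} (hf : Continuous f) (h0 : Tendsto f (cocompact β) (𝓝 0)) {p : ℝ} (hp : 0 < p)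
    (hfp : ∀ x, f x < p) : ∃ M < p, ∀ x, f x ≤ M := by
  obtain ⟨x₀, hx₀⟩ := (hf.max continuous_const).exists_forall_ge' (Classical.arbitrary β) <| by
    filter_upwards [h0.eventually (eventually_le_nhds (half_pos hp))] with x hx
    exact (max_eq_right hx).trans_le (le_max_right _ _)
  exact ⟨max (f x₀) (p / 2), max_lt (hfp x₀) (half_lt_self hp),
    fun x => (le_max_left _ _).trans (hx₀ x)⟩

lemma csInf_pos_of_eventually_notMem {J : Set ℝ} (hne : J.Nonempty) (hnn : ∀ u ∈ J, 0 ≤ u)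
    (h : ∀ᶠ u in 𝓝 0, u ∉ J) : 0 < sInf J := by
  obtain ⟨ε, hε, hball⟩ := Metric.eventually_nhds_iff.1 h
  refine hε.trans_le (le_csInf hne fun u hu => ?_)
  by_contra! hlt
  exact hball (by rwa [Real.dist_eq, sub_zero, abs_of_nonneg (hnn u hu)]) hu

lemma IsHalfLineAlg.exists_eq_biUnion_Ioc {A : Set ℝ} (hA : IsHalfLineAlg A)
    (hIic : ∀ a, ¬ Iic a ⊆ A) (hIoi : ∀ a, ¬ Ioi a ⊆ A) :
    ∃ (s : Finset (Set ℝ)) (l r : Set ℝ → ℝ), A = ⋃ I ∈ s, Ioc (l I) (r I) := by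
  obtain ⟨s, hs, rfl⟩ := hA
  have hIoc : ∀ I ∈ s, ∃ a b, I = Ioc a b := fun I hI => by
    rcases hs I hI with ⟨a, rfl⟩ | hab | ⟨a, rfl⟩
    · exact absurd (subset_biUnion_of_mem hI) (hIic a)
    · exact hab
    · exact absurd (subset_biUnion_of_mem hI) (hIoi a)
  choose! l r hlr using hIoc
  exact ⟨s, l, r, iUnion₂_congr hlr⟩

noncomputable def Jtilde (μ : Measure ℝ) (A : Set ℝ) (p : ℝ) : ℝ :=
  sInf {u : ℝ | u ∈ Ico (0 : ℝ) 1 ∧ p ≤ ⨆ x : ℝ, μ.real ((fun a => a / √(1 - u) - x) '' A)}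

section ProbabilityOnReal

variable (μ : Measure ℝ) [IsProbabilityMeasure μ]

lemma bddAbove_range_measureReal {β : Type*} (S : β → Set ℝ) :
    BddAbove (range fun x => μ.real (S x)) :=
  ⟨1, forall_mem_range.2 fun _ => measureReal_le_one⟩

lemma measureReal_Ioi_eq_one_sub_cdf (t : ℝ) : μ.real (Ioi t) = 1 - cdf μ t := by
  rw [← compl_Iic, measureReal_compl measurableSet_Iic, probReal_univ, cdf_eq_real]

lemma tendsto_measureReal_Iic_atTop : Tendsto (fun t => μ.real (Iic t)) atTop (𝓝 1) :=
  (tendsto_cdf_atTop μ).congr (cdf_eq_real μ)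

lemma tendsto_measureReal_Iic_atBot : Tendsto (fun t => μ.real (Iic t)) atBot (𝓝 0) :=
  (tendsto_cdf_atBot μ).congr (cdf_eq_real μ)

lemma tendsto_measureReal_Ioi_atTop : Tendsto (fun t => μ.real (Ioi t)) atTop (𝓝 0) := by
  simpa [measureReal_Ioi_eq_one_sub_cdf] using (tendsto_cdf_atTop μ).const_sub 1

lemma tendsto_measureReal_Ioi_atBot : Tendsto (fun t => μ.real (Ioi t)) atBot (𝓝 1) := by
  simpa [measureReal_Ioi_eq_one_sub_cdf] using (tendsto_cdf_atBot μ).const_sub 1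

lemma tendsto_measureReal_Ioc_neg_atTop : Tendsto (fun t => μ.real (Ioc (-t) t)) atTop (𝓝 1) := by
  have h := (tendsto_measureReal_Iic_atTop μ).sub
    ((tendsto_measureReal_Iic_atBot μ).comp tendsto_neg_atTop_atBot)
  rw [sub_zero] at h
  refine h.congr' ?_
  filter_upwards [eventually_ge_atTop 0] with t ht
  rw [← Iic_sdiff_Iic, measureReal_sdiff (Iic_subset_Iic.2 (by linarith)) measurableSet_Iic]
  rfl

lemma exists_le_measureReal_image_add_of_Iic_subset {A : Set ℝ} {a p : ℝ} (hA : Iic a ⊆ A)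
    (hp : p < 1) : ∃ x, 0 ≤ x ∧ p ≤ μ.real ((fun t => t + x) '' A) := by
  have h : Tendsto (fun x => μ.real (Iic (a + x))) atTop (𝓝 1) :=
    (tendsto_measureReal_Iic_atTop μ).comp (tendsto_atTop_add_const_left _ a tendsto_id)
  obtain ⟨x, hx0, hx⟩ := ((eventually_ge_atTop 0).and (h.eventually (eventually_ge_nhds hp))).exists
  refine ⟨x, hx0, hx.trans (measureReal_mono ?_)⟩
  rw [← image_add_const_Iic]
  exact image_mono hA

lemma exists_le_measureReal_image_sub_of_Ioi_subset {A : Set ℝ} {a p : ℝ} (hA : Ioi a ⊆ A)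
    (hp : p < 1) : ∃ x, 0 ≤ x ∧ p ≤ μ.real ((fun t => t - x) '' A) := by
  have h : Tendsto (fun x => μ.real (Ioi (a - x))) atTop (𝓝 1) :=
    (tendsto_measureReal_Ioi_atBot μ).comp <|
      (tendsto_atBot_add_const_left _ a tendsto_neg_atTop_atBot).congr fun _ =>
        (sub_eq_add_neg _ _).symm
  obtain ⟨x, hx0, hx⟩ := ((eventually_ge_atTop 0).and (h.eventually (eventually_ge_nhds hp))).exists
  refine ⟨x, hx0, hx.trans (measureReal_mono ?_)⟩
  rw [← image_sub_const_Ioi]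
  exact image_mono hA

lemma tendsto_measureReal_image_sub_cocompact {B : Set ℝ} (hB : Bornology.IsBounded B) :
    Tendsto (fun x => μ.real ((fun t => t - x) '' B)) (cocompact ℝ) (𝓝 0) := by
  obtain ⟨a, b, hab⟩ : ∃ a b, B ⊆ Icc a b := ⟨_, _, hB.subset_Icc_sInf_sSup⟩
  rw [cocompact_eq_atBot_atTop, tendsto_sup]
  constructor
  · have hIoi : Tendsto (fun x => μ.real (Ioi (a - 1 - x))) atBot (𝓝 0) :=
      (tendsto_measureReal_Ioi_atTop μ).comp <|
        (tendsto_atTop_add_const_left _ (a - 1) tendsto_neg_atBot_atTop).congr fun _ =>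
          (sub_eq_add_neg _ _).symm
    refine tendsto_of_tendsto_of_tendsto_of_le_of_le tendsto_const_nhds hIoi
      (fun x => measureReal_nonneg) fun x => measureReal_mono ?_
    rintro _ ⟨t, ht, rfl⟩
    simp only [mem_Ioi]
    linarith [(hab ht).1]
  · have hIic : Tendsto (fun x => μ.real (Iic (b - x))) atTop (𝓝 0) :=
      (tendsto_measureReal_Iic_atBot μ).comp <|
        (tendsto_atBot_add_const_left _ b tendsto_neg_atTop_atBot).congr fun _ =>
          (sub_eq_add_neg _ _).symm
    refine tendsto_of_tendsto_of_tendsto_of_le_of_le tendsto_const_nhds hIic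
      (fun x => measureReal_nonneg) fun x => measureReal_mono ?_
    rintro _ ⟨t, ht, rfl⟩
    simp only [mem_Iic]
    linarith [(hab ht).2]

lemma exists_le_iSup_measureReal_image_div_sub {A : Set ℝ} {l r p : ℝ} (hlr : l < r)
    (hA : Ioc l r ⊆ A) (hp : p < 1) :
    ∃ u ∈ Ico (0 : ℝ) 1, p ≤ ⨆ x, μ.real ((fun a => a / √(1 - u) - x) '' A) := by
  set h := (r - l) / 2
  have hsqrt : Tendsto (fun u : ℝ => √(1 - u)) (𝓝[<] 1) (𝓝[>] 0) := by
    refine tendsto_nhdsWithin_iff.2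
      ⟨?_, eventually_nhdsWithin_of_forall fun u hu => Real.sqrt_pos.2 (sub_pos.2 hu)⟩
    have : Continuous fun u : ℝ => √(1 - u) := by fun_prop
    simpa using (this.tendsto 1).mono_left nhdsWithin_le_nhds
  have hrad : Tendsto (fun u => h / √(1 - u)) (𝓝[<] 1) atTop := by
    simpa only [div_eq_mul_inv, Function.comp_def] using
      (tendsto_inv_nhdsGT_zero.comp hsqrt).const_mul_atTop (by positivity : 0 < h)
  have hIoo : ∀ᶠ u in 𝓝[<] (1 : ℝ), u ∈ Ioo 0 1 := Ioo_mem_nhdsLT zero_lt_one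
  obtain ⟨u, hu, hup⟩ := (hIoo.and
    (((tendsto_measureReal_Ioc_neg_atTop μ).comp hrad).eventually (eventually_ge_nhds hp))).exists
  have hc : 0 < √(1 - u) := Real.sqrt_pos.2 (sub_pos.2 hu.2)
  -- the shift centres the dilated interval `(l, r]` at the origin
  refine ⟨u, Ioo_subset_Ico_self hu, hup.trans (le_ciSup_of_le (bddAbove_range_measureReal μ _)
    ((l + r) / 2 / √(1 - u)) (measureReal_mono ?_))⟩
  calc Ioc (-(h / √(1 - u))) (h / √(1 - u))
      = (fun a => a / √(1 - u) - (l + r) / 2 / √(1 - u)) '' Ioc l r := by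
        rw [image_div_sub_Ioc hc]
        congr 1 <;> ring
    _ ⊆ _ := image_mono hA

lemma Jtilde_nonpos_of_le_measureReal_image_sub {A : Set ℝ} {p x : ℝ}
    (hx : p ≤ μ.real ((fun a => a - x) '' A)) : Jtilde μ A p ≤ 0 :=
  csInf_le ⟨0, fun _ hu => hu.1.1⟩ ⟨⟨le_rfl, one_pos⟩,
    hx.trans (le_ciSup_of_le (bddAbove_range_measureReal μ _) x (by simp))⟩

end ProbabilityOnReal

section FiniteUnionOfIoc

variable {ι : Type*} (s : Finset ι) (l r : ι → ℝ) (μ : Measure ℝ)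

lemma measureReal_image_div_sub_le [IsFiniteMeasure μ] (hμ : μ ≤ volume) {c c' : ℝ} (hc : 0 < c)
    (hc' : 0 < c') (x x' : ℝ) :
    μ.real ((fun t => t / c - x) '' ⋃ i ∈ s, Ioc (l i) (r i)) ≤
      μ.real ((fun t => t / c' - x') '' ⋃ i ∈ s, Ioc (l i) (r i)) +
        ∑ i ∈ s, (|l i / c - x - (l i / c' - x')| + |r i / c - x - (r i / c' - x')|) := by
  rw [image_div_sub_biUnion_Ioc s l r hc, image_div_sub_biUnion_Ioc s l r hc']
  exact measureReal_biUnion_Ioc_le μ hμ s _ _ _ _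

lemma lipschitzWith_measureReal_image_sub [IsFiniteMeasure μ] (hμ : μ ≤ volume) :
    LipschitzWith (2 * s.card) fun x => μ.real ((fun t => t - x) '' ⋃ i ∈ s, Ioc (l i) (r i)) := by
  refine LipschitzWith.of_le_add_mul _ fun x y => ?_
  have h := measureReal_image_div_sub_le s l r μ hμ one_pos one_pos x y
  simp only [div_one, sub_sub_sub_cancel_left, Finset.sum_const, nsmul_eq_mul] at h
  convert h using 2
  rw [Real.dist_eq, abs_sub_comm]
  push_cast
  ring

lemma measureReal_image_div_sub_le_add [IsFiniteMeasure μ] (hμ : μ ≤ volume) {c : ℝ} (hc : 0 < c)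
    (x : ℝ) :
    μ.real ((fun t => t / c - x) '' ⋃ i ∈ s, Ioc (l i) (r i)) ≤
      μ.real ((fun t => t - x) '' ⋃ i ∈ s, Ioc (l i) (r i)) +
        ∑ i ∈ s, (|l i / c - l i| + |r i / c - r i|) := by
  simpa only [div_one, sub_sub_sub_cancel_right] using
    measureReal_image_div_sub_le s l r μ hμ hc one_pos x x

lemma tendsto_sum_abs_div_sqrt_one_sub_sub :
    Tendsto (fun u => ∑ i ∈ s, (|l i / √(1 - u) - l i| + |r i / √(1 - u) - r i|)) (𝓝 0) (𝓝 0) := by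
  have h : ContinuousAt
      (fun u => ∑ i ∈ s, (|l i / √(1 - u) - l i| + |r i / √(1 - u) - r i|)) 0 := by
    fun_prop (disch := simp)
  simpa using h.tendsto

lemma Jtilde_biUnion_Ioc_pos [IsProbabilityMeasure μ] (hμ : μ ≤ volume) {p : ℝ} (hp0 : 0 < p)
    (hp1 : p < 1) (hne : (⋃ i ∈ s, Ioc (l i) (r i)).Nonempty)
    (hlt : ∀ x, μ.real ((fun t => t - x) '' ⋃ i ∈ s, Ioc (l i) (r i)) < p) :
    0 < Jtilde μ (⋃ i ∈ s, Ioc (l i) (r i)) p := by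
  have hbdd := (Bornology.isBounded_biUnion_finset s).2 fun i _ => Metric.isBounded_Ioc (l i) (r i)
  obtain ⟨M, hMp, hM⟩ := exists_lt_forall_le_of_tendsto_cocompact
    (lipschitzWith_measureReal_image_sub s l r μ hμ).continuous
    (tendsto_measureReal_image_sub_cocompact μ hbdd) hp0 hlt
  obtain ⟨i, hi, hyi⟩ := mem_iUnion₂.1 hne.some_mem
  obtain ⟨u₁, hu₁, hpu₁⟩ := exists_le_iSup_measureReal_image_div_sub μ (hyi.1.trans_le hyi.2)
    (subset_biUnion_of_mem (u := fun i => Ioc (l i) (r i)) hi) hp1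
  refine csInf_pos_of_eventually_notMem ⟨u₁, hu₁, hpu₁⟩ (fun u hu => hu.1.1) ?_
  filter_upwards [(tendsto_sum_abs_div_sqrt_one_sub_sub s l r).eventually
    (gt_mem_nhds (sub_pos.2 hMp))] with u hu ⟨⟨_, hu1⟩, hpu⟩
  have hc : 0 < √(1 - u) := Real.sqrt_pos.2 (sub_pos.2 hu1)
  have hsup := ciSup_le fun x => (measureReal_image_div_sub_le_add s l r μ hμ hc x).trans
    (add_le_add_left (hM x) _)
  linarith

end FiniteUnionOfIoc

/-- `J̃(A,p) > 0` if and only if `min{Ĩ⁺(A,p), Ĩ⁻(A,p)} = ∞`, i.e. both sets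
`{x ≥ 0 : ν(A ∓ x) ≥ p}` are empty. -/
theorem Jtilde_pos_iff_I_infinite (A : Set ℝ) (hA : IsHalfLineAlg A) (hne : A.Nonempty)
    (p : ℝ) (hp : p ∈ Set.Ioo (0 : ℝ) 1) :
    0 < sInf {u : ℝ | u ∈ Set.Ico (0 : ℝ) 1 ∧
        p ≤ ⨆ x : ℝ, ((gaussianReal 0 1)
          ((fun a => a / Real.sqrt (1 - u) - x) '' A)).toReal} ↔
      ({x : ℝ | 0 ≤ x ∧ p ≤ ((gaussianReal 0 1) ((fun a => a - x) '' A)).toReal} = ∅ ∧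
       {x : ℝ | 0 ≤ x ∧ p ≤ ((gaussianReal 0 1) ((fun a => a + x) '' A)).toReal} = ∅) := by
  obtain ⟨hp0, hp1⟩ := hp
  change 0 < Jtilde (gaussianReal 0 1) A p ↔ _
  simp only [← measureReal_def, eq_empty_iff_forall_notMem, mem_ofPred_eq, not_and, not_le]
  constructor
  · intro hpos
    refine ⟨fun x _ => lt_of_not_ge fun hx => ?_, fun x _ => lt_of_not_ge fun hx => ?_⟩
    · exact (Jtilde_nonpos_of_le_measureReal_image_sub _ hx).not_gt hpos
    · exact (Jtilde_nonpos_of_le_measureReal_image_sub _ (x := -x) (by simpa using hx)).not_gt hpos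
  · rintro ⟨hminus, hplus⟩
    obtain ⟨s, l, r, rfl⟩ := hA.exists_eq_biUnion_Ioc
      (fun a ha => let ⟨x, hx0, hx⟩ := exists_le_measureReal_image_add_of_Iic_subset _ ha hp1
        (hplus x hx0).not_ge hx)
      (fun a ha => let ⟨x, hx0, hx⟩ := exists_le_measureReal_image_sub_of_Ioi_subset _ ha hp1
        (hminus x hx0).not_ge hx)
    refine Jtilde_biUnion_Ioc_pos s l r _ (gaussianReal_le_volume 0) hp0 hp1 hne fun x => ?_
    rcases le_total 0 x with hx | hx
    · exact hminus x hx
    · simpa [sub_eq_add_neg] using hplus (-x) (neg_nonneg.2 hx)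
end

section
/- Let 𝕏 be a family of mean-zero real random variables such that sup_{X∈𝕏} E[e^{θ₀ X}] < ∞ for some θ₀ > 0 and sup_{X∈𝕏} E[(X⁻)²] < ∞. Then there exists C > 0 such that for all sufficiently small x > 0, all m ≥ 1 and all independent X_1, ..., X_m each distributed as some member of 𝕏, P((1/m)∑_{i=1}^m X_i > x) ≤ e^{−C x² m}. -/
/-!
For `t ≥ 0`, `e^t ≤ 1 + t + t² e^t`, and for `t ≤ 0`, `e^t ≤ 1 + t + t²`. Hence for
`0 ≤ θ ≤ θ₀ / 2` the quadratic remainder of `e^{θy}` is absorbed by `e^{θ₀ y}` when `y ≥ 0` and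
by `(y⁻)²` when `y < 0`: `e^{θy} ≤ 1 + θy + θ² (8 θ₀⁻² e^{θ₀ y} + (y⁻)²)`. Integrating against a
mean-zero law of `𝕏` gives `E[e^{θX}] ≤ 1 + K θ² ≤ e^{K θ²}` with `K` depending only on `θ₀` and
the two uniform bounds, so by independence the sum of `m` variables has moment generating
function at most `e^{m K θ²}`. The Chernoff bound with `θ = x / (2K)`, admissible for
`x ≤ K θ₀`, gives `P(∑ Xᵢ ≥ m x) ≤ e^{-x² m / (4K)}`.
-/

open MeasureTheory ProbabilityTheory

namespace Real

lemma exp_mul_one_sub_le_one (t : ℝ) : exp t * (1 - t) ≤ 1 := by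
  have h := mul_le_mul_of_nonneg_left (add_one_le_exp (-t)) (exp_pos t).le
  rwa [← exp_add, add_neg_cancel, exp_zero, neg_add_eq_sub] at h

lemma exp_le_one_add_add_sq_mul_exp {t : ℝ} (ht : 0 ≤ t) : exp t ≤ 1 + t + t ^ 2 * exp t := by
  nlinarith [exp_mul_one_sub_le_one t]

lemma exp_le_one_add_add_sq {t : ℝ} (ht : t ≤ 0) : exp t ≤ 1 + t + t ^ 2 := by
  nlinarith [exp_mul_one_sub_le_one t, exp_pos t, sq_nonneg t]

lemma sq_mul_exp_mul_le {θ₀ θ y : ℝ} (hθ₀ : 0 < θ₀) (hθ : θ ≤ θ₀ / 2) (hy : 0 ≤ y) :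
    y ^ 2 * exp (θ * y) ≤ 8 / θ₀ ^ 2 * exp (θ₀ * y) := by
  have hsq : y ^ 2 ≤ 8 / θ₀ ^ 2 * exp (θ₀ / 2 * y) := by
    have h := pow_div_factorial_le_exp (x := θ₀ / 2 * y) (by positivity) 2
    rw [div_mul_eq_mul_div, le_div_iff₀ (by positivity)]
    norm_num [Nat.factorial] at h
    nlinarith
  calc y ^ 2 * exp (θ * y) ≤ 8 / θ₀ ^ 2 * exp (θ₀ / 2 * y) * exp (θ₀ / 2 * y) := by
        gcongr
    _ = 8 / θ₀ ^ 2 * exp (θ₀ * y) := by rw [mul_assoc, ← exp_add]; ring_nf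

lemma exp_mul_le_one_add_mul_add_sq_mul {θ₀ θ : ℝ} (hθ₀ : 0 < θ₀) (hθ : 0 ≤ θ)
    (hθθ₀ : θ ≤ θ₀ / 2) (y : ℝ) :
    exp (θ * y) ≤ 1 + θ * y + θ ^ 2 * (8 / θ₀ ^ 2 * exp (θ₀ * y) + max (-y) 0 ^ 2) := by
  rcases le_total 0 y with hy | hy
  · have h := exp_le_one_add_add_sq_mul_exp (mul_nonneg hθ hy)
    have h' := mul_le_mul_of_nonneg_left (sq_mul_exp_mul_le hθ₀ hθθ₀ hy) (sq_nonneg θ)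
    rw [max_eq_right (neg_nonpos.2 hy)]
    nlinarith
  · have h := exp_le_one_add_add_sq (mul_nonpos_of_nonneg_of_nonpos hθ hy)
    rw [max_eq_left (neg_nonneg.2 hy)]
    have : 0 ≤ θ ^ 2 * (8 / θ₀ ^ 2 * exp (θ₀ * y)) := by positivity
    nlinarith

end Real

namespace ProbabilityTheory

open Real

lemma integrable_exp_mul_id_of_le {ν : Measure ℝ} [IsFiniteMeasure ν] {θ₀ θ : ℝ}
    (hν : Integrable (fun y : ℝ => exp (θ₀ * y)) ν) (hθ : 0 ≤ θ) (hθθ₀ : θ ≤ θ₀) :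
    Integrable (fun y : ℝ => exp (θ * y)) ν :=
  integrable_exp_mul_of_le_of_le (X := id) (by simp) hν hθ hθθ₀

lemma mgf_id_le_exp_sq (ν : Measure ℝ) [IsProbabilityMeasure ν] {θ₀ θ M V K : ℝ}
    (hθ₀ : 0 < θ₀) (hθ : 0 ≤ θ) (hθθ₀ : θ ≤ θ₀ / 2)
    (hint : Integrable (fun y : ℝ => y) ν) (hmean : ∫ y, y ∂ν = 0)
    (hmgfInt : Integrable (fun y : ℝ => exp (θ₀ * y)) ν) (hmgf : ∫ y, exp (θ₀ * y) ∂ν ≤ M)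
    (hnegInt : Integrable (fun y : ℝ => max (-y) 0 ^ 2) ν) (hneg : ∫ y, max (-y) 0 ^ 2 ∂ν ≤ V)
    (hK : 8 / θ₀ ^ 2 * M + V ≤ K) :
    mgf id ν θ ≤ exp (K * θ ^ 2) := by
  have hexpInt := integrable_exp_mul_id_of_le hmgfInt hθ (by linarith)
  have hlinInt : Integrable (fun y : ℝ => 1 + θ * y) ν :=
    (integrable_const 1).add (hint.const_mul θ)
  have hremInt : Integrable (fun y : ℝ => 8 / θ₀ ^ 2 * exp (θ₀ * y) + max (-y) 0 ^ 2) ν :=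
    (hmgfInt.const_mul _).add hnegInt
  have hrem : ∫ y, (8 / θ₀ ^ 2 * exp (θ₀ * y) + max (-y) 0 ^ 2) ∂ν ≤ K := by
    rw [integral_add (hmgfInt.const_mul _) hnegInt, integral_const_mul]
    have : 0 ≤ 8 / θ₀ ^ 2 := by positivity
    nlinarith
  calc mgf id ν θ
      ≤ ∫ y, (1 + θ * y + θ ^ 2 * (8 / θ₀ ^ 2 * exp (θ₀ * y) + max (-y) 0 ^ 2)) ∂ν :=
        integral_mono hexpInt (hlinInt.add (hremInt.const_mul _))
          (exp_mul_le_one_add_mul_add_sq_mul hθ₀ hθ hθθ₀)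
    _ ≤ 1 + K * θ ^ 2 := by
        rw [integral_add hlinInt (hremInt.const_mul _), integral_add (integrable_const 1)
          (hint.const_mul θ), integral_const_mul, integral_const_mul, hmean]
        simp only [integral_const, probReal_univ, smul_eq_mul, mul_one, mul_zero, add_zero]
        nlinarith [sq_nonneg θ]
    _ ≤ exp (K * θ ^ 2) := by linarith [add_one_le_exp (K * θ ^ 2)]

lemma measure_sum_ge_le_of_mgf_le {ι Ω : Type*} [Fintype ι] {_ : MeasurableSpace Ω}
    {μ : Measure Ω} {X : ι → Ω → ℝ} (h_indep : iIndepFun X μ) (h_meas : ∀ i, Measurable (X i))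
    {θ K : ℝ} (hθ : 0 ≤ θ) (h_int : ∀ i, Integrable (fun ω => exp (θ * X i ω)) μ)
    (h_mgf : ∀ i, mgf (X i) μ θ ≤ exp (K * θ ^ 2)) (ε : ℝ) :
    μ.real {ω | ε ≤ ∑ i, X i ω} ≤ exp (-θ * ε + Fintype.card ι * K * θ ^ 2) := by
  have := h_indep.isProbabilityMeasure
  have hsum : mgf (∑ i, X i) μ θ ≤ exp (Fintype.card ι * K * θ ^ 2) := by
    rw [h_indep.mgf_sum h_meas]
    calc ∏ i, mgf (X i) μ θ ≤ ∏ _i : ι, exp (K * θ ^ 2) :=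
          Finset.prod_le_prod (fun i _ => mgf_nonneg) (fun i _ => h_mgf i)
      _ = exp (Fintype.card ι * K * θ ^ 2) := by
          rw [Finset.prod_const, Finset.card_univ, ← exp_nat_mul, mul_assoc]
  calc μ.real {ω | ε ≤ ∑ i, X i ω} ≤ exp (-θ * ε) * mgf (∑ i, X i) μ θ := by
        simpa only [Finset.sum_apply] using measure_ge_le_exp_mul_mgf ε hθ
          (h_indep.integrable_exp_mul_sum h_meas fun i _ => h_int i)
    _ ≤ exp (-θ * ε) * exp (Fintype.card ι * K * θ ^ 2) := by gcongr
    _ = exp (-θ * ε + Fintype.card ι * K * θ ^ 2) := (exp_add _ _).symm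

end ProbabilityTheory

/-- Uniform Chernoff–Cramér upper bound: for a family `𝕏` of mean-zero laws with a
uniform exponential moment bound and a uniform second moment bound on the negative
part, there is `C > 0` such that for all small `x > 0`, all `m ≥ 1` and independent
random variables whose laws belong to `𝕏`,
`P((1/m) ∑ X_i > x) ≤ exp(-C x² m)`. -/
theorem uniform_chernoff_cramer (𝕏 : Set (Measure ℝ)) (θ₀ M V : ℝ) (hθ₀ : 0 < θ₀)
    (hprob : ∀ π ∈ 𝕏, IsProbabilityMeasure π)
    (hint : ∀ π ∈ 𝕏, Integrable (fun y : ℝ => y) π)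
    (hmean : ∀ π ∈ 𝕏, ∫ y, y ∂π = 0)
    (hmgfInt : ∀ π ∈ 𝕏, Integrable (fun y : ℝ => Real.exp (θ₀ * y)) π)
    (hmgf : ∀ π ∈ 𝕏, ∫ y, Real.exp (θ₀ * y) ∂π ≤ M)
    (hnegInt : ∀ π ∈ 𝕏, Integrable (fun y : ℝ => (max (-y) 0) ^ 2) π)
    (hneg : ∀ π ∈ 𝕏, ∫ y, (max (-y) 0) ^ 2 ∂π ≤ V) :
    ∃ C > (0 : ℝ), ∃ x₀ > (0 : ℝ), ∀ x : ℝ, 0 < x → x < x₀ →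
      ∀ m : ℕ, 1 ≤ m →
      ∀ (Ω : Type) (mΩ : MeasurableSpace Ω) (μ : Measure Ω),
        IsProbabilityMeasure μ →
        ∀ X : Fin m → Ω → ℝ, (∀ i, Measurable (X i)) →
          iIndepFun X μ →
          (∀ i, Measure.map (X i) μ ∈ 𝕏) →
          μ {ω | x < (∑ i, X i ω) / m} ≤
            ENNReal.ofReal (Real.exp (-(C * x ^ 2 * m))) := by
  obtain ⟨K, hK, hKpos⟩ : ∃ K, 8 / θ₀ ^ 2 * M + V ≤ K ∧ 0 < K :=
    ⟨max (8 / θ₀ ^ 2 * M + V) 1, le_max_left _ _, by positivity⟩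
  refine ⟨1 / (4 * K), by positivity, K * θ₀, by positivity, ?_⟩
  intro x hx hxx₀ m hm Ω mΩ μ _ X hXmeas hindep hlaw
  set θ := x / (2 * K)
  have hθ : 0 ≤ θ := by positivity
  have hθθ₀ : θ ≤ θ₀ / 2 := by rw [div_le_div_iff₀ (by positivity) two_pos]; nlinarith
  have hX : ∀ i, Integrable (fun ω => Real.exp (θ * X i ω)) μ ∧
      mgf (X i) μ θ ≤ Real.exp (K * θ ^ 2) := fun i => by
    have hπ := hlaw i
    have := hprob _ hπ
    refine ⟨(integrable_map_measure (by fun_prop) (hXmeas i).aemeasurable).mp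
      (integrable_exp_mul_id_of_le (hmgfInt _ hπ) hθ (by linarith)), ?_⟩
    rw [← mgf_id_map (hXmeas i).aemeasurable]
    exact mgf_id_le_exp_sq _ hθ₀ hθ hθθ₀ (hint _ hπ) (hmean _ hπ) (hmgfInt _ hπ) (hmgf _ hπ)
      (hnegInt _ hπ) (hneg _ hπ) hK
  have hm₀ : (0 : ℝ) < m := by exact_mod_cast hm
  calc μ {ω | x < (∑ i, X i ω) / m} ≤ μ {ω | m * x ≤ ∑ i, X i ω} := measure_mono fun ω hω =>
        ((lt_div_iff₀' hm₀).1 hω).le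
    _ = ENNReal.ofReal (μ.real {ω | m * x ≤ ∑ i, X i ω}) := (ofReal_measureReal).symm
    _ ≤ ENNReal.ofReal (Real.exp (-(1 / (4 * K) * x ^ 2 * m))) := by
        refine ENNReal.ofReal_le_ofReal ((measure_sum_ge_le_of_mgf_le hindep hXmeas hθ
          (fun i => (hX i).1) (fun i => (hX i).2) (m * x)).trans_eq ?_)
        rw [Fintype.card_fin]
        congr 1
        simp only [θ]
        field_simp
        ring
end

section
/- In the branching random walk of Example 3 (each particle produces N children, half at +1 and half at −1 relative to the parent, with N ∈ {e^{b₀}, e^{b₁}}, 2 ≤ e^{b₀} < e^{b₁}), for every b ∈ [b₀, b₁], n ≥ 1 and ζ ∈ 𝒵_n(b), one has n^{−1}⟨ζ̄, x⟩ ≤ γ(b), where γ(b₀) = 0 and γ(b) = β^{−1}((b₁ − b) ∧ log 2) for b ∈ (b₀, b₁], with β(x) = (1/2)((1+x)log(1+x)+(1−x)log(1−x)). -/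
/-- The inverse of `β : [0,1] → [0, log 2]`. -/
noncomputable def brwBetaInv (y : ℝ) : ℝ :=
  sInf {x : ℝ | x ∈ Set.Icc (0 : ℝ) 1 ∧ y ≤ brwBeta x}

/-- One-generation evolution of a configuration, offspring support `S`. -/
def NextGen (S : Set (Multiset ℝ)) (ζ : Multiset ℝ) : Set (Multiset ℝ) :=
  {ζ' | ∃ m : Multiset (ℝ × Multiset ℝ),
    m.map Prod.fst = ζ ∧ (∀ p ∈ m, p.2 ∈ S) ∧
    ζ' = (m.map (fun p => p.2.map (fun y => y + p.1))).sum}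

/-- Possible generation-`n` configurations started from a single particle at `0`. -/
def Gens (S : Set (Multiset ℝ)) : ℕ → Set (Multiset ℝ)
  | 0 => {({0} : Multiset ℝ)}
  | n + 1 => ⋃ ζ ∈ Gens S n, NextGen S ζ


/-!
Every particle has at most `2k₁` children, half at `+1` and half at `-1`, so the exponential
moments of any generation-`n` configuration satisfy `∑_{x ∈ ζ} e^{λx} ≤ (2k₁ cosh λ)^n`.
If `|ζ| = e^{bn}`, Jensen's inequality turns this into `λα - log cosh λ ≤ b₁ - b` for every `λ`,
where `α` is the mean position divided by `n`. The Legendre transform of `log cosh` is `β`, with the supremum attained at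
`λ = artanh x`; together with `λα - log cosh λ ≤ log 2` (as `α ≤ 1`) this gives
`α ≤ β⁻¹((b₁ - b) ∧ log 2)`.

At `b = b₀` the configuration has the minimal size `(2k₀)^n`, which forces every particle to have
had exactly `2k₀` children; since offspring are balanced, the total displacement stays `0`.
-/

open Real

section Legendre

variable {x l α y : ℝ}

theorem brwBeta_one : brwBeta 1 = log 2 := by
  norm_num [brwBeta]
  ring

theorem brwBeta_eq_artanh_mul_sub_log_cosh (hx : x ∈ Set.Ioo (-1) 1) :
    brwBeta x = artanh x * x - log (cosh (artanh x)) := by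
  have h₁ : 0 < 1 + x := by linarith [hx.1]
  have h₂ : 0 < 1 - x := by linarith [hx.2]
  have hsq : 1 - x ^ 2 = (1 + x) * (1 - x) := by ring
  rw [cosh_artanh hx, artanh_eq_half_log (Set.Ioo_subset_Icc_self hx), one_div (√_), log_inv,
    log_sqrt (by rw [hsq]; positivity), hsq, log_div h₁.ne' h₂.ne', log_mul h₁.ne' h₂.ne', brwBeta]
  ring

theorem log_cosh_le (hl : 0 ≤ l) : log (cosh l) ≤ l := by
  rw [log_le_iff_le_exp (cosh_pos l), cosh_eq]
  linarith [exp_le_exp.2 (show -l ≤ l by linarith)]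

theorem sub_log_two_le_log_cosh (l : ℝ) : l - log 2 ≤ log (cosh l) := by
  have : exp l / 2 ≤ cosh l := by rw [cosh_eq]; linarith [exp_pos (-l)]
  calc l - log 2 = log (exp l / 2) := by rw [log_div (exp_ne_zero l) two_ne_zero, log_exp]
    _ ≤ log (cosh l) := log_le_log (by positivity) this

theorem le_one_of_forall_mul_sub_log_cosh_le (h : ∀ l, 0 ≤ l → l * α - log (cosh l) ≤ y) :
    α ≤ 1 := by
  by_contra! hα
  have hl : 0 ≤ (|y| + 1) / (α - 1) := by have := sub_pos.2 hα; positivity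
  have hmul : (|y| + 1) / (α - 1) * (α - 1) = |y| + 1 := div_mul_cancel₀ _ (sub_pos.2 hα).ne'
  linarith [h _ hl, log_cosh_le hl, le_abs_self y]

theorem exists_brwBeta_lt_mul_sub_log_cosh (hx : 0 ≤ x) (hxα : x < α) (hα : α ≤ 1) :
    ∃ l, 0 ≤ l ∧ brwBeta x < l * α - log (cosh l) := by
  rcases hx.eq_or_lt with rfl | hx
  · refine ⟨α, hxα.le, ?_⟩
    have : log (cosh α) ≤ α ^ 2 / 2 :=
      (log_le_log (cosh_pos α) (cosh_le_exp_half_sq α)).trans (log_exp _).le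
    norm_num [brwBeta]
    nlinarith [mul_pos hxα hxα]
  · have hx1 : x ∈ Set.Ioo (-1) 1 := ⟨by linarith, by linarith⟩
    have hl : 0 < artanh x := artanh_pos ⟨hx, hx1.2⟩
    refine ⟨artanh x, hl.le, ?_⟩
    rw [brwBeta_eq_artanh_mul_sub_log_cosh hx1]
    linarith [mul_pos hl (sub_pos.2 hxα)]

theorem le_brwBetaInv_of_forall_mul_sub_log_cosh_le
    (h : ∀ l, 0 ≤ l → l * α - log (cosh l) ≤ y) : α ≤ brwBetaInv (min y (log 2)) := by
  have hα := le_one_of_forall_mul_sub_log_cosh_le h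
  refine le_csInf ⟨1, ⟨by norm_num, le_rfl⟩, brwBeta_one ▸ min_le_right _ _⟩ ?_
  rintro x ⟨⟨hx, -⟩, hxβ⟩
  by_contra! hxα
  obtain ⟨l, hl, hlt⟩ := exists_brwBeta_lt_mul_sub_log_cosh hx hxα hα
  have hlog2 : l * α - log (cosh l) ≤ log 2 := by
    linarith [sub_log_two_le_log_cosh l, mul_le_of_le_one_right hl hα]
  linarith [le_min (h l hl) hlog2]

end Legendre

theorem card_mul_exp_mean_le_sum_map_exp (t : Multiset ℝ) (ht : t ≠ 0) :
    Multiset.card t * exp (t.sum / Multiset.card t) ≤ (t.map exp).sum := by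
  set μ := t.sum / Multiset.card t
  have hc : (0 : ℝ) < Multiset.card t := by exact_mod_cast Multiset.card_pos.2 ht
  have tangent : ∀ x ∈ t, exp μ * (1 + (x - μ)) ≤ exp x := fun x _ =>
    calc exp μ * (1 + (x - μ)) ≤ exp μ * exp (x - μ) := by
          gcongr; linarith [add_one_le_exp (x - μ)]
      _ = exp x := by rw [← exp_add]; ring_nf
  calc Multiset.card t * exp μ = (t.map fun x => exp μ * (1 + (x - μ))).sum := by
        simp only [Multiset.sum_map_mul_left, Multiset.sum_map_add, Multiset.sum_map_sub,
          Multiset.map_const', Multiset.sum_replicate, Multiset.map_id', nsmul_eq_mul, μ]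
        field_simp
        ring
    _ ≤ (t.map exp).sum := Multiset.sum_map_le_sum_map _ _ tangent

section Gens

variable {S : Set (Multiset ℝ)} {ζ ζ' : Multiset ℝ}

theorem mem_Gens_zero : ζ ∈ Gens S 0 ↔ ζ = {0} := Iff.rfl

theorem mem_Gens_succ {n : ℕ} : ζ' ∈ Gens S (n + 1) ↔ ∃ ζ ∈ Gens S n, ζ' ∈ NextGen S ζ := by
  simp [Gens]

theorem exists_sum_map_eq_of_mem_NextGen (h : ζ' ∈ NextGen S ζ) :
    ∃ m : Multiset (ℝ × Multiset ℝ), m.map Prod.fst = ζ ∧ (∀ p ∈ m, p.2 ∈ S) ∧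
      ∀ φ : ℝ → ℝ, (ζ'.map φ).sum = (m.map fun p => (p.2.map fun y => φ (y + p.1)).sum).sum := by
  obtain ⟨m, hm, hS, rfl⟩ := h
  refine ⟨m, hm, hS, fun φ => ?_⟩
  change ((Multiset.join _).map φ).sum = _
  simp only [Multiset.map_join, Multiset.sum_join, Multiset.map_map, Function.comp_def]

theorem sum_map_le_of_mem_NextGen {φ : ℝ → ℝ} {C : ℝ}
    (hφ : ∀ s ∈ S, ∀ x, (s.map fun y => φ (y + x)).sum ≤ C * φ x) (h : ζ' ∈ NextGen S ζ) :
    (ζ'.map φ).sum ≤ C * (ζ.map φ).sum := by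
  obtain ⟨m, rfl, hS, hsum⟩ := exists_sum_map_eq_of_mem_NextGen h
  rw [hsum φ, Multiset.map_map, ← Multiset.sum_map_mul_left]
  exact Multiset.sum_map_le_sum_map _ _ fun p hp => hφ p.2 (hS p hp) p.1

theorem sum_map_le_pow_of_mem_Gens {φ : ℝ → ℝ} {C : ℝ} (hC : 0 ≤ C)
    (hφ : ∀ s ∈ S, ∀ x, (s.map fun y => φ (y + x)).sum ≤ C * φ x) :
    ∀ n, ∀ ζ ∈ Gens S n, (ζ.map φ).sum ≤ C ^ n * φ 0
  | 0, ζ, h => by simp [mem_Gens_zero.1 h]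
  | n + 1, ζ', h => by
    obtain ⟨ζ, hζ, h⟩ := mem_Gens_succ.1 h
    calc (ζ'.map φ).sum ≤ C * (ζ.map φ).sum := sum_map_le_of_mem_NextGen hφ h
      _ ≤ C * (C ^ n * φ 0) := by gcongr; exact sum_map_le_pow_of_mem_Gens hC hφ n ζ hζ
      _ = C ^ (n + 1) * φ 0 := by ring

theorem sum_map_add_const (s : Multiset ℝ) (x : ℝ) :
    (s.map (· + x)).sum = s.sum + Multiset.card s * x := by
  simp [Multiset.sum_map_add]

theorem mul_card_le_and_sum_eq_of_mem_NextGen {k : ℝ} (hcard : ∀ s ∈ S, k ≤ Multiset.card s)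
    (hsum : ∀ s ∈ S, s.sum = 0) (h : ζ' ∈ NextGen S ζ) :
    k * Multiset.card ζ ≤ Multiset.card ζ' ∧
      ((Multiset.card ζ' : ℝ) = k * Multiset.card ζ → ζ'.sum = k * ζ.sum) := by
  obtain ⟨m, rfl, hS, hsum'⟩ := exists_sum_map_eq_of_mem_NextGen h
  have hk : ∀ p ∈ m, k ≤ Multiset.card p.2 := fun p hp => hcard p.2 (hS p hp)
  have hcard' : (Multiset.card ζ' : ℝ) = (m.map fun p => (Multiset.card p.2 : ℝ)).sum := by
    simpa using hsum' 1
  have hkm : k * Multiset.card (m.map Prod.fst) = (m.map fun _ => k).sum := by simp [mul_comm]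
  have hsum'' : ζ'.sum = (m.map fun p => (Multiset.card p.2 : ℝ) * p.1).sum := by
    have := hsum' id
    simp only [id, Multiset.map_id'] at this
    rw [this]
    refine congrArg _ (Multiset.map_congr rfl fun p hp => ?_)
    rw [sum_map_add_const, hsum _ (hS p hp), zero_add]
  refine ⟨by rw [hcard', hkm]; exact Multiset.sum_map_le_sum_map _ _ hk, fun heq => ?_⟩
  have hall : ∀ p ∈ m, (Multiset.card p.2 : ℝ) = k := by
    by_contra! ⟨p, hp, hne⟩
    have := Multiset.sum_lt_sum hk ⟨p, hp, lt_of_le_of_ne (hk p hp) hne.symm⟩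
    linarith
  rw [hsum'', Multiset.map_congr rfl fun p hp => by rw [hall p hp], Multiset.sum_map_mul_left]

theorem pow_le_card_and_sum_eq_zero_of_mem_Gens {k : ℝ} (hk : 0 < k)
    (hcard : ∀ s ∈ S, k ≤ Multiset.card s) (hsum : ∀ s ∈ S, s.sum = 0) :
    ∀ n, ∀ ζ ∈ Gens S n,
      k ^ n ≤ Multiset.card ζ ∧ ((Multiset.card ζ : ℝ) = k ^ n → ζ.sum = 0)
  | 0, ζ, h => by simp [mem_Gens_zero.1 h]
  | n + 1, ζ', h => by
    obtain ⟨ζ, hζ, h⟩ := mem_Gens_succ.1 h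
    obtain ⟨ih_le, ih_eq⟩ := pow_le_card_and_sum_eq_zero_of_mem_Gens hk hcard hsum n ζ hζ
    obtain ⟨step_le, step_eq⟩ := mul_card_le_and_sum_eq_of_mem_NextGen hcard hsum h
    refine ⟨by rw [pow_succ']; exact (mul_le_mul_of_nonneg_left ih_le hk.le).trans step_le,
      fun heq => ?_⟩
    have hζn : (Multiset.card ζ : ℝ) = k ^ n :=
      le_antisymm (le_of_mul_le_mul_left (by rw [← pow_succ', ← heq]; exact step_le) hk) ih_le
    rw [step_eq (by rw [heq, hζn, pow_succ']), ih_eq hζn, mul_zero]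

end Gens

section Example3

def balancedOffspring (k : ℕ) : Multiset ℝ :=
  Multiset.replicate k (-1) + Multiset.replicate k 1

theorem card_balancedOffspring (k : ℕ) : Multiset.card (balancedOffspring k) = 2 * k := by
  simp [balancedOffspring, two_mul]

theorem sum_balancedOffspring (k : ℕ) : (balancedOffspring k).sum = 0 := by
  simp [balancedOffspring]

theorem sum_map_exp_balancedOffspring (k : ℕ) (l x : ℝ) :
    ((balancedOffspring k).map fun y => exp (l * (y + x))).sum = 2 * k * cosh l * exp (l * x) := by
  simp only [balancedOffspring, Multiset.map_add, Multiset.map_replicate, Multiset.sum_add,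
    Multiset.sum_replicate, nsmul_eq_mul, cosh_eq, mul_add, exp_add, mul_neg, mul_one]
  ring

variable {k₀ k₁ n : ℕ} {ζ : Multiset ℝ}

theorem sum_eq_zero_of_mem_Gens_of_card_eq (hk₀ : 0 < k₀) (hk : k₀ ≤ k₁)
    (hζ : ζ ∈ Gens {balancedOffspring k₀, balancedOffspring k₁} n)
    (hcard : (Multiset.card ζ : ℝ) = (2 * k₀ : ℝ) ^ n) : ζ.sum = 0 := by
  refine (pow_le_card_and_sum_eq_zero_of_mem_Gens (by positivity) ?_ ?_ n ζ hζ).2 hcard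
  · rintro s (rfl | rfl) <;> simp only [card_balancedOffspring] <;> push_cast <;> gcongr
  · rintro s (rfl | rfl) <;> exact sum_balancedOffspring _

theorem sum_map_exp_le_of_mem_Gens (hk : k₀ ≤ k₁) (l : ℝ)
    (hζ : ζ ∈ Gens {balancedOffspring k₀, balancedOffspring k₁} n) :
    (ζ.map fun x => exp (l * x)).sum ≤ (2 * k₁ * cosh l) ^ n := by
  have hφ : ∀ s ∈ ({balancedOffspring k₀, balancedOffspring k₁} : Set (Multiset ℝ)), ∀ x,
      (s.map fun y => exp (l * (y + x))).sum ≤ 2 * k₁ * cosh l * exp (l * x) := by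
    rintro s (rfl | rfl) x <;> rw [sum_map_exp_balancedOffspring]
    gcongr
  have hC : 0 ≤ 2 * (k₁ : ℝ) * cosh l := by have := cosh_pos l; positivity
  simpa using sum_map_le_pow_of_mem_Gens (φ := fun x => exp (l * x)) hC hφ n ζ hζ

theorem mul_mean_sub_log_cosh_le_of_mem_Gens (hk : k₀ < k₁) {b : ℝ} (hn : 1 ≤ n)
    (hζ : ζ ∈ Gens {balancedOffspring k₀, balancedOffspring k₁} n)
    (hcard : (Multiset.card ζ : ℝ) = exp (b * n)) (l : ℝ) :
    l * (ζ.sum / Multiset.card ζ / n) - log (cosh l) ≤ log (2 * k₁) - b := by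
  have hn0 : (0 : ℝ) < n := by exact_mod_cast hn
  have hk₁ : (0 : ℝ) < 2 * k₁ := by
    have : (0 : ℝ) < k₁ := by exact_mod_cast Nat.zero_lt_of_lt hk
    positivity
  have hne : ζ ≠ 0 := by rintro rfl; simp [(exp_pos _).ne] at hcard
  have hjensen := card_mul_exp_mean_le_sum_map_exp (ζ.map (l * ·)) (by simpa using hne)
  have hsum : (ζ.map (l * ·)).sum = l * ζ.sum := by
    simpa using Multiset.sum_map_mul_left (s := ζ) (a := l) (f := id)
  simp only [Multiset.card_map, Multiset.map_map, Function.comp_def, hsum, mul_div_assoc]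
    at hjensen
  have hexp : exp (b * n + l * (ζ.sum / Multiset.card ζ)) ≤
      exp (n * (log (2 * k₁) + log (cosh l))) := by
    rw [exp_add, ← hcard, ← log_mul hk₁.ne' (cosh_pos l).ne', exp_nat_mul,
      exp_log (by positivity)]
    exact hjensen.trans (sum_map_exp_le_of_mem_Gens hk.le l hζ)
  rw [mul_div_assoc', div_sub' hn0.ne', div_le_iff₀ hn0]
  linarith [exp_le_exp.1 hexp]

end Example3

/-- Example 3 of the paper: every particle produces `N ∈ {2k₀, 2k₁}` children, half
at `+1` and half at `-1` relative to the parent. For `b ∈ [b₀, b₁]` with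
`b₀ = log(2k₀)`, `b₁ = log(2k₁)`, every `ζ ∈ 𝒵_n(b)` satisfies
`n⁻¹ ⟨ζ̄, x⟩ ≤ γ(b)` where `γ(b₀) = 0` and `γ(b) = β⁻¹((b₁ - b) ∧ log 2)` for
`b ∈ (b₀, b₁]`. -/
theorem example3_average_height_upper_bound (k₀ k₁ : ℕ) (hk₀ : 1 ≤ k₀) (hk : k₀ < k₁) :
    ∀ b : ℝ, b ∈ Set.Icc (Real.log (2 * k₀)) (Real.log (2 * k₁)) →
    ∀ n : ℕ, 1 ≤ n →
    ∀ ζ ∈ Gens ({Multiset.replicate k₀ (-1 : ℝ) + Multiset.replicate k₀ (1 : ℝ),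
                  Multiset.replicate k₁ (-1 : ℝ) + Multiset.replicate k₁ (1 : ℝ)} :
                Set (Multiset ℝ)) n,
      (Multiset.card ζ : ℝ) = Real.exp (b * n) →
      ζ.sum / (Multiset.card ζ : ℝ) ≤
        (if b = Real.log (2 * k₀) then 0
         else brwBetaInv (min (Real.log (2 * k₁) - b) (Real.log 2))) * n := by
  intro b _ n hn ζ hζ hcard
  split_ifs with hb₀
  · have hpow : (Multiset.card ζ : ℝ) = (2 * k₀ : ℝ) ^ n := by
      rw [hcard, hb₀, mul_comm, exp_nat_mul, exp_log (by positivity)]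
    rw [sum_eq_zero_of_mem_Gens_of_card_eq hk₀ hk.le hζ hpow, zero_div, zero_mul]
  · have hmean := le_brwBetaInv_of_forall_mul_sub_log_cosh_le fun l _ =>
      mul_mean_sub_log_cosh_le_of_mem_Gens hk hn hζ hcard l
    have hn0 : (0 : ℝ) < n := by exact_mod_cast hn
    calc ζ.sum / Multiset.card ζ = ζ.sum / Multiset.card ζ / n * n :=
          (div_mul_cancel₀ _ hn0.ne').symm
      _ ≤ _ := by gcongr
end
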